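/- arXiv:1511.08386 — 5 statements merged into one kernel-verified Lean document; each statement's English description precedes it below -/
import Mathlib

section
/- For every 3CNF formula φ with n variables and k clauses, each clause being a set of three literals over pairwise distinct variables, φ has a 1-in-3 satisfying assignment (an assignment making exactly one literal of every clause true) if and only if there exists an edge-labeled typed graph satisfying the configuration G_φ. -/
/-- A 3CNF formula with `n` variables and `k` clauses: each clause is a triple of
literals (variable index, polarity) over pairwise distinct variables. -/
structure CNF3 (n k : ℕ) where
  clause : Fin k → Fin 3 → Fin n × Bool
  distinct : ∀ j : Fin k, Function.Injective (fun a : Fin 3 => (clause j a).1)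

/-- Variable `x i` occurs positively in clause `j`. -/
abbrev CNF3.occursPos {n k : ℕ} (φ : CNF3 n k) (i : Fin n) (j : Fin k) : Prop :=
  ∃ a : Fin 3, φ.clause j a = (i, true)

/-- Variable `x i` occurs negatively in clause `j`. -/
abbrev CNF3.occursNeg {n k : ℕ} (φ : CNF3 n k) (i : Fin n) (j : Fin k) : Prop :=
  ∃ a : Fin 3, φ.clause j a = (i, false)

/-- `v` is a 1-in-3 satisfying assignment: every clause has exactly one true literal. -/
def CNF3.OneInThree {n k : ℕ} (φ : CNF3 n k) (v : Fin n → Bool) : Prop :=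
  ∀ j : Fin k,
    (Finset.univ.filter fun a : Fin 3 => v (φ.clause j a).1 = (φ.clause j a).2).card = 1

/-- The node types Θ_φ. -/
inductive NodeType (n k : ℕ) where
  | A : NodeType n k
  | C : Fin k → NodeType n k
  | B : Fin n → NodeType n k
  | T : Fin n → NodeType n k
  | F : Fin n → NodeType n k
  deriving DecidableEq, Fintype

/-- The edge labels Σ_φ. -/
inductive EdgeLabel (n k : ℕ) where
  | c : Fin k → EdgeLabel n k
  | b : Fin n → EdgeLabel n k
  | t : Fin n → EdgeLabel n k
  | f : Fin n → EdgeLabel n k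
  deriving DecidableEq, Fintype

/-- An edge-labeled typed graph over Θ_φ and Σ_φ: a finite node set `V` with a
typing function `τ` and a finite set of labeled edges. -/
structure TypedGraph (n k : ℕ) where
  V : Type
  fin : Fintype V
  dec : DecidableEq V
  τ : V → NodeType n k
  E : Finset (V × EdgeLabel n k × V)

attribute [instance] TypedGraph.fin TypedGraph.dec

/-- Condition (6): the edge is one of those permitted by (3)-(4). -/
def LegalEdge {n k : ℕ} (φ : CNF3 n k) (G : TypedGraph n k)
    (e : G.V × EdgeLabel n k × G.V) : Prop :=
  match e.2.1 with
  | .t i => G.τ e.1 = .A ∧ G.τ e.2.2 = .T i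
  | .f i => G.τ e.1 = .A ∧ G.τ e.2.2 = .F i
  | .b i => (G.τ e.1 = .T i ∨ G.τ e.1 = .F i) ∧ G.τ e.2.2 = .B i
  | .c j => (∃ i, G.τ e.1 = .T i ∧ φ.occursPos i j ∧ G.τ e.2.2 = .C j) ∨
            (∃ i, G.τ e.1 = .F i ∧ φ.occursNeg i j ∧ G.τ e.2.2 = .C j)

/-- The graph `G` satisfies the configuration `G_φ`. -/
structure SatisfiesConfig {n k : ℕ} (φ : CNF3 n k) (G : TypedGraph n k) : Prop where
  /-- (1) the graph has `2n + k + 1` nodes. -/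
  card_nodes : Fintype.card G.V = 2 * n + k + 1
  /-- (2) exactly one node of type `A`. -/
  unique_A : (Finset.univ.filter fun x : G.V => G.τ x = NodeType.A).card = 1
  /-- (2) exactly one node of type `B i` for each `i`. -/
  unique_B : ∀ i : Fin n, (Finset.univ.filter fun x : G.V => G.τ x = NodeType.B i).card = 1
  /-- (2) exactly one node of type `C j` for each `j`. -/
  unique_C : ∀ j : Fin k, (Finset.univ.filter fun x : G.V => G.τ x = NodeType.C j).card = 1
  /-- (3) every `t i`-edge goes from the `A`-node to a `T i`-node. -/
  t_edges : ∀ e ∈ G.E, ∀ i : Fin n, e.2.1 = EdgeLabel.t i →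
      G.τ e.1 = NodeType.A ∧ G.τ e.2.2 = NodeType.T i
  /-- (3) at most one outgoing `t i`-edge (all of which start at the unique `A`-node). -/
  t_once : ∀ i : Fin n, (G.E.filter fun e => e.2.1 = EdgeLabel.t i).card ≤ 1
  /-- (3) every `f i`-edge goes from the `A`-node to an `F i`-node. -/
  f_edges : ∀ e ∈ G.E, ∀ i : Fin n, e.2.1 = EdgeLabel.f i →
      G.τ e.1 = NodeType.A ∧ G.τ e.2.2 = NodeType.F i
  /-- (3) at most one outgoing `f i`-edge. -/
  f_once : ∀ i : Fin n, (G.E.filter fun e => e.2.1 = EdgeLabel.f i).card ≤ 1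
  /-- (4) a `T i`-node has exactly one outgoing `c j`-edge to a `C j`-node, for each
  clause `j` in which `x i` occurs positively. -/
  T_out_c : ∀ u : G.V, ∀ i : Fin n, G.τ u = NodeType.T i → ∀ j : Fin k, φ.occursPos i j →
      (G.E.filter fun e => e.1 = u ∧ e.2.1 = EdgeLabel.c j ∧ G.τ e.2.2 = NodeType.C j).card = 1
  /-- (4) a `T i`-node has exactly one outgoing `b i`-edge to a `B i`-node. -/
  T_out_b : ∀ u : G.V, ∀ i : Fin n, G.τ u = NodeType.T i →
      (G.E.filter fun e => e.1 = u ∧ e.2.1 = EdgeLabel.b i ∧ G.τ e.2.2 = NodeType.B i).card = 1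
  /-- (4) an `F i`-node has exactly one outgoing `c j`-edge to a `C j`-node, for each
  clause `j` in which `x i` occurs negatively. -/
  F_out_c : ∀ u : G.V, ∀ i : Fin n, G.τ u = NodeType.F i → ∀ j : Fin k, φ.occursNeg i j →
      (G.E.filter fun e => e.1 = u ∧ e.2.1 = EdgeLabel.c j ∧ G.τ e.2.2 = NodeType.C j).card = 1
  /-- (4) an `F i`-node has exactly one outgoing `b i`-edge to a `B i`-node. -/
  F_out_b : ∀ u : G.V, ∀ i : Fin n, G.τ u = NodeType.F i →
      (G.E.filter fun e => e.1 = u ∧ e.2.1 = EdgeLabel.b i ∧ G.τ e.2.2 = NodeType.B i).card = 1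
  /-- (5) each `B i`-node has exactly one incoming `b i`-edge. -/
  B_in : ∀ i : Fin n, ∀ x : G.V, G.τ x = NodeType.B i →
      (G.E.filter fun e => e.2.1 = EdgeLabel.b i ∧ e.2.2 = x).card = 1
  /-- (5) each `C j`-node has exactly one incoming `c j`-edge. -/
  C_in : ∀ j : Fin k, ∀ x : G.V, G.τ x = NodeType.C j →
      (G.E.filter fun e => e.2.1 = EdgeLabel.c j ∧ e.2.2 = x).card = 1
  /-- (6) only the edges permitted by (3)-(4) occur. -/
  legal : ∀ e ∈ G.E, LegalEdge φ G e

namespace OneInThreeAux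

variable {n k : ℕ}

/-- Node carrier for the constructed graph: `A`, the `C j`'s, the `B i`'s, and one
node `X i` per variable. -/
abbrev Vt (n k : ℕ) : Type := Unit ⊕ Fin k ⊕ Fin n ⊕ Fin n

def nX (i : Fin n) : Vt n k := Sum.inr (Sum.inr (Sum.inr i))
def nB (i : Fin n) : Vt n k := Sum.inr (Sum.inr (Sum.inl i))
def nC (j : Fin k) : Vt n k := Sum.inr (Sum.inl j)
def nA : Vt n k := Sum.inl ()

@[simp] lemma nX_inj {i i' : Fin n} : (nX i : Vt n k) = nX i' ↔ i = i' := by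
  simp [nX]
@[simp] lemma nB_inj {i i' : Fin n} : (nB i : Vt n k) = nB i' ↔ i = i' := by
  simp [nB]
@[simp] lemma nC_inj {j j' : Fin k} : (nC j : Vt n k) = nC j' ↔ j = j' := by
  simp [nC]

def tau (v : Fin n → Bool) : Vt n k → NodeType n k
  | Sum.inl _ => .A
  | Sum.inr (Sum.inl j) => .C j
  | Sum.inr (Sum.inr (Sum.inl i)) => .B i
  | Sum.inr (Sum.inr (Sum.inr i)) => if v i then .T i else .F i

@[simp] lemma tau_nA {v : Fin n → Bool} : tau (k := k) v nA = .A := rfl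
@[simp] lemma tau_nC {v : Fin n → Bool} {j : Fin k} : tau v (nC j : Vt n k) = .C j := rfl
@[simp] lemma tau_nB {v : Fin n → Bool} {i : Fin n} : tau (k := k) v (nB i) = .B i := rfl
@[simp] lemma tau_nX {v : Fin n → Bool} {i : Fin n} :
    tau (k := k) v (nX i) = if v i then .T i else .F i := rfl

lemma tau_eq_A_iff {v : Fin n → Bool} {x : Vt n k} : tau v x = .A ↔ x = nA := by
  rcases x with _ | j | i | i <;> simp [tau, nA, nC, nB, nX]
  split <;> simp

lemma tau_eq_C_iff {v : Fin n → Bool} {x : Vt n k} {j : Fin k} :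
    tau v x = .C j ↔ x = nC j := by
  rcases x with _ | j' | i | i <;> simp [tau, nA, nC, nB, nX]
  split <;> simp

lemma tau_eq_B_iff {v : Fin n → Bool} {x : Vt n k} {i : Fin n} :
    tau v x = .B i ↔ x = nB i := by
  rcases x with _ | j' | i' | i' <;> simp [tau, nA, nC, nB, nX]
  split <;> simp

lemma tau_eq_T_iff {v : Fin n → Bool} {x : Vt n k} {i : Fin n} :
    tau v x = .T i ↔ x = nX i ∧ v i = true := by
  rcases x with _ | j' | i' | i' <;> simp [tau, nA, nC, nB, nX]
  rcases h : v i' with _ | _ <;> simp [h] <;> (rintro rfl; exact h)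

lemma tau_eq_F_iff {v : Fin n → Bool} {x : Vt n k} {i : Fin n} :
    tau v x = .F i ↔ x = nX i ∧ v i = false := by
  rcases x with _ | j' | i' | i' <;> simp [tau, nA, nC, nB, nX]
  rcases h : v i' with _ | _ <;> simp [h] <;> (rintro rfl; exact h)

/-- The edge relation of the constructed graph, as a `Bool`-valued predicate. -/
def Pb (φ : CNF3 n k) (v : Fin n → Bool) (u : Vt n k) :
    EdgeLabel n k → Vt n k → Bool
  | .t i, w => v i && decide (u = nA) && decide (w = nX i)
  | .f i, w => !(v i) && decide (u = nA) && decide (w = nX i)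
  | .b i, w => decide (u = nX i) && decide (w = nB i)
  | .c j, w => decide (∃ a : Fin 3, v (φ.clause j a).1 = (φ.clause j a).2 ∧
      u = nX (φ.clause j a).1 ∧ w = nC j)

abbrev Gr (φ : CNF3 n k) (v : Fin n → Bool) : TypedGraph n k where
  V := Vt n k
  fin := inferInstance
  dec := inferInstance
  τ := tau v
  E := Finset.univ.filter fun e => Pb φ v e.1 e.2.1 e.2.2 = true

@[simp] lemma Gr_tau {φ : CNF3 n k} {v : Fin n → Bool} : (Gr φ v).τ = tau v := rfl

lemma mem_E {φ : CNF3 n k} {v : Fin n → Bool} {e : Vt n k × EdgeLabel n k × Vt n k} :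
    e ∈ (Gr φ v).E ↔ Pb φ v e.1 e.2.1 e.2.2 = true := by
  simp [Gr]

theorem forward {φ : CNF3 n k} {v : Fin n → Bool} (hv : φ.OneInThree v) :
    SatisfiesConfig φ (Gr φ v) where
  card_nodes := by
    show Fintype.card (Vt n k) = 2 * n + k + 1
    simp [Vt]
    omega
  unique_A := by
    rw [Finset.card_eq_one]
    exact ⟨nA, by ext x; simp [tau_eq_A_iff (v := v)]⟩
  unique_B := fun i => by
    rw [Finset.card_eq_one]
    exact ⟨nB i, by ext x; simp [tau_eq_B_iff (v := v)]⟩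
  unique_C := fun j => by
    rw [Finset.card_eq_one]
    exact ⟨nC j, by ext x; simp [tau_eq_C_iff (v := v)]⟩
  t_edges := by
    rintro ⟨u, l, w⟩ he i rfl
    rw [mem_E] at he
    simp only [Pb, Bool.and_eq_true, decide_eq_true_eq] at he
    obtain ⟨⟨hvi, rfl⟩, rfl⟩ := he
    exact ⟨rfl, by simp [hvi]⟩
  t_once := fun i => by
    rw [Finset.card_le_one]
    rintro ⟨u, l, w⟩ h1 ⟨u', l', w'⟩ h2
    simp only [Finset.mem_filter] at h1 h2
    obtain ⟨h1, rfl⟩ := h1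
    obtain ⟨h2, rfl⟩ := h2
    replace h1 := h1.2; replace h2 := h2.2
    simp only [Pb, Bool.and_eq_true, decide_eq_true_eq] at h1 h2
    obtain ⟨⟨-, rfl⟩, rfl⟩ := h1
    obtain ⟨⟨-, rfl⟩, rfl⟩ := h2
    rfl
  f_edges := by
    rintro ⟨u, l, w⟩ he i rfl
    rw [mem_E] at he
    simp only [Pb, Bool.and_eq_true, decide_eq_true_eq, Bool.not_eq_true'] at he
    obtain ⟨⟨hvi, rfl⟩, rfl⟩ := he
    exact ⟨rfl, by simp [hvi]⟩
  f_once := fun i => by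
    rw [Finset.card_le_one]
    rintro ⟨u, l, w⟩ h1 ⟨u', l', w'⟩ h2
    simp only [Finset.mem_filter] at h1 h2
    obtain ⟨h1, rfl⟩ := h1
    obtain ⟨h2, rfl⟩ := h2
    replace h1 := h1.2; replace h2 := h2.2
    simp only [Pb, Bool.and_eq_true, decide_eq_true_eq] at h1 h2
    obtain ⟨⟨-, rfl⟩, rfl⟩ := h1
    obtain ⟨⟨-, rfl⟩, rfl⟩ := h2
    rfl
  T_out_c := by
    intro u i hu j hj
    rw [Gr_tau, tau_eq_T_iff] at hu
    obtain ⟨rfl, hvi⟩ := hu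
    obtain ⟨a, ha⟩ := hj
    rw [Finset.card_eq_one]
    refine ⟨(nX i, .c j, nC j), ?_⟩
    ext ⟨u', l, w⟩
    rw [Finset.mem_filter, Finset.mem_singleton]
    constructor
    · rintro ⟨he, rfl, rfl, hw⟩
      rw [Gr_tau, tau_eq_C_iff] at hw
      subst hw
      rfl
    · rintro h
      simp only [Prod.mk.injEq] at h
      obtain ⟨rfl, rfl, rfl⟩ := h
      refine ⟨?_, rfl, rfl, by simp⟩
      rw [mem_E]
      simp only [Pb, decide_eq_true_eq]
      exact ⟨a, by rw [ha]; exact hvi, by rw [ha], trivial⟩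
  T_out_b := by
    intro u i hu
    rw [Gr_tau, tau_eq_T_iff] at hu
    obtain ⟨rfl, hvi⟩ := hu
    rw [Finset.card_eq_one]
    refine ⟨(nX i, .b i, nB i), ?_⟩
    ext ⟨u', l, w⟩
    rw [Finset.mem_filter, Finset.mem_singleton]
    constructor
    · rintro ⟨he, rfl, rfl, hw⟩
      rw [Gr_tau, tau_eq_B_iff] at hw
      subst hw
      rfl
    · rintro h
      simp only [Prod.mk.injEq] at h
      obtain ⟨rfl, rfl, rfl⟩ := h
      refine ⟨?_, rfl, rfl, by simp⟩
      rw [mem_E]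
      simp [Pb]
  F_out_c := by
    intro u i hu j hj
    rw [Gr_tau, tau_eq_F_iff] at hu
    obtain ⟨rfl, hvi⟩ := hu
    obtain ⟨a, ha⟩ := hj
    rw [Finset.card_eq_one]
    refine ⟨(nX i, .c j, nC j), ?_⟩
    ext ⟨u', l, w⟩
    rw [Finset.mem_filter, Finset.mem_singleton]
    constructor
    · rintro ⟨he, rfl, rfl, hw⟩
      rw [Gr_tau, tau_eq_C_iff] at hw
      subst hw
      rfl
    · rintro h
      simp only [Prod.mk.injEq] at h
      obtain ⟨rfl, rfl, rfl⟩ := h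
      refine ⟨?_, rfl, rfl, by simp⟩
      rw [mem_E]
      simp only [Pb, decide_eq_true_eq]
      exact ⟨a, by rw [ha]; exact hvi, by rw [ha], trivial⟩
  F_out_b := by
    intro u i hu
    rw [Gr_tau, tau_eq_F_iff] at hu
    obtain ⟨rfl, hvi⟩ := hu
    rw [Finset.card_eq_one]
    refine ⟨(nX i, .b i, nB i), ?_⟩
    ext ⟨u', l, w⟩
    rw [Finset.mem_filter, Finset.mem_singleton]
    constructor
    · rintro ⟨he, rfl, rfl, hw⟩
      rw [Gr_tau, tau_eq_B_iff] at hw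
      subst hw
      rfl
    · rintro h
      simp only [Prod.mk.injEq] at h
      obtain ⟨rfl, rfl, rfl⟩ := h
      refine ⟨?_, rfl, rfl, by simp⟩
      rw [mem_E]
      simp [Pb]
  B_in := by
    intro i x hx
    rw [Gr_tau, tau_eq_B_iff] at hx
    subst hx
    rw [Finset.card_eq_one]
    refine ⟨(nX i, .b i, nB i), ?_⟩
    ext ⟨u', l, w⟩
    rw [Finset.mem_filter, Finset.mem_singleton]
    constructor
    · rintro ⟨he, rfl, rfl⟩
      rw [mem_E] at he
      simp only [Pb, Bool.and_eq_true, decide_eq_true_eq] at he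
      obtain ⟨rfl, -⟩ := he
      rfl
    · rintro h
      simp only [Prod.mk.injEq] at h
      obtain ⟨rfl, rfl, rfl⟩ := h
      refine ⟨?_, rfl, rfl⟩
      rw [mem_E]
      simp [Pb]
  C_in := by
    intro j x hx
    rw [Gr_tau, tau_eq_C_iff] at hx
    subst hx
    have h1 := hv j
    rw [Finset.card_eq_one] at h1
    obtain ⟨a₀, ha₀⟩ := h1
    have hmem : ∀ a : Fin 3, v (φ.clause j a).1 = (φ.clause j a).2 ↔ a = a₀ := by
      intro a
      constructor
      · intro h
        have h1 : a ∈ Finset.filter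
            (fun a => v (φ.clause j a).1 = (φ.clause j a).2) Finset.univ :=
          Finset.mem_filter.2 ⟨Finset.mem_univ _, h⟩
        rw [ha₀] at h1
        exact Finset.mem_singleton.1 h1
      · intro h
        rw [h]
        have h1 : a₀ ∈ ({a₀} : Finset (Fin 3)) := Finset.mem_singleton_self _
        rw [← ha₀] at h1
        exact (Finset.mem_filter.1 h1).2
    rw [Finset.card_eq_one]
    refine ⟨(nX (φ.clause j a₀).1, .c j, nC j), ?_⟩
    ext ⟨u', l, w⟩
    rw [Finset.mem_filter, Finset.mem_singleton]
    constructor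
    · rintro ⟨he, rfl, rfl⟩
      rw [mem_E] at he
      simp only [Pb, decide_eq_true_eq] at he
      obtain ⟨a, hva, rfl, -⟩ := he
      rw [hmem] at hva
      subst hva
      rfl
    · rintro h
      simp only [Prod.mk.injEq] at h
      obtain ⟨rfl, rfl, rfl⟩ := h
      refine ⟨?_, rfl, rfl⟩
      rw [mem_E]
      simp only [Pb, decide_eq_true_eq]
      exact ⟨a₀, (hmem a₀).2 rfl, rfl, trivial⟩
  legal := by
    rintro ⟨u, l, w⟩ he
    rw [mem_E] at he
    rcases l with j | i | i | i
    · simp only [Pb, decide_eq_true_eq] at he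
      obtain ⟨a, hva, rfl, rfl⟩ := he
      rcases hpol : (φ.clause j a).2 with _ | _
      · exact Or.inr ⟨(φ.clause j a).1,
          tau_eq_F_iff.2 ⟨rfl, by rw [← hpol, hva]⟩,
          ⟨a, Prod.ext rfl hpol⟩, by simp⟩
      · exact Or.inl ⟨(φ.clause j a).1,
          tau_eq_T_iff.2 ⟨rfl, by rw [← hpol, hva]⟩,
          ⟨a, Prod.ext rfl hpol⟩, by simp⟩
    · simp only [Pb, Bool.and_eq_true, decide_eq_true_eq] at he
      obtain ⟨rfl, rfl⟩ := he
      refine ⟨?_, by simp⟩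
      rcases h : v i with _ | _
      · exact Or.inr (by simp [h])
      · exact Or.inl (by simp [h])
    · simp only [Pb, Bool.and_eq_true, decide_eq_true_eq] at he
      obtain ⟨⟨hvi, rfl⟩, rfl⟩ := he
      exact ⟨by simp, by simp [hvi]⟩
    · simp only [Pb, Bool.and_eq_true, decide_eq_true_eq, Bool.not_eq_true'] at he
      obtain ⟨⟨hvi, rfl⟩, rfl⟩ := he
      exact ⟨by simp, by simp [hvi]⟩

theorem backward {φ : CNF3 n k} {G : TypedGraph n k} (hG : SatisfiesConfig φ G) :
    ∃ v : Fin n → Bool, φ.OneInThree v := by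
  classical
  -- unique B-node and C-node
  have hBex : ∀ i : Fin n, ∃ x : G.V, G.τ x = .B i ∧ ∀ y, G.τ y = .B i → y = x := by
    intro i
    have h := hG.unique_B i
    rw [Finset.card_eq_one] at h
    obtain ⟨x, hx⟩ := h
    have hmem : ∀ y : G.V, G.τ y = .B i → y = x := by
      intro y hy
      have : y ∈ Finset.univ.filter fun z : G.V => G.τ z = NodeType.B i :=
        Finset.mem_filter.2 ⟨Finset.mem_univ _, hy⟩
      rw [hx] at this
      exact Finset.mem_singleton.1 this
    have hxB : G.τ x = .B i := by
      have : x ∈ Finset.univ.filter fun z : G.V => G.τ z = NodeType.B i := by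
        rw [hx]; exact Finset.mem_singleton_self _
      exact (Finset.mem_filter.1 this).2
    exact ⟨x, hxB, hmem⟩
  have hCex : ∀ j : Fin k, ∃ x : G.V, G.τ x = .C j ∧ ∀ y, G.τ y = .C j → y = x := by
    intro j
    have h := hG.unique_C j
    rw [Finset.card_eq_one] at h
    obtain ⟨x, hx⟩ := h
    have hmem : ∀ y : G.V, G.τ y = .C j → y = x := by
      intro y hy
      have : y ∈ Finset.univ.filter fun z : G.V => G.τ z = NodeType.C j :=
        Finset.mem_filter.2 ⟨Finset.mem_univ _, hy⟩
      rw [hx] at this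
      exact Finset.mem_singleton.1 this
    have hxC : G.τ x = .C j := by
      have : x ∈ Finset.univ.filter fun z : G.V => G.τ z = NodeType.C j := by
        rw [hx]; exact Finset.mem_singleton_self _
      exact (Finset.mem_filter.1 this).2
    exact ⟨x, hxC, hmem⟩
  -- at most one node typed T i or F i, for each i
  have key : ∀ i : Fin n, ∀ x y : G.V,
      (G.τ x = .T i ∨ G.τ x = .F i) → (G.τ y = .T i ∨ G.τ y = .F i) → x = y := by
    intro i x y hx hy
    obtain ⟨xB, hxB, huB⟩ := hBex i
    have hcard := hG.B_in i xB hxB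
    rw [Finset.card_eq_one] at hcard
    obtain ⟨e₀, he₀⟩ := hcard
    have hedge : ∀ z : G.V, (G.τ z = .T i ∨ G.τ z = .F i) → ∃ e, e ∈ G.E ∧
        e.1 = z ∧ e.2.1 = EdgeLabel.b i ∧ e.2.2 = xB := by
      intro z hz
      have hc : (G.E.filter fun e =>
          e.1 = z ∧ e.2.1 = EdgeLabel.b i ∧ G.τ e.2.2 = NodeType.B i).card = 1 := by
        rcases hz with hz | hz
        · exact hG.T_out_b z i hz
        · exact hG.F_out_b z i hz
      rw [Finset.card_eq_one] at hc
      obtain ⟨e, he⟩ := hc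
      have hm : e ∈ G.E.filter fun e =>
          e.1 = z ∧ e.2.1 = EdgeLabel.b i ∧ G.τ e.2.2 = NodeType.B i := by
        rw [he]; exact Finset.mem_singleton_self _
      obtain ⟨heE, h1, h2, h3⟩ := Finset.mem_filter.1 hm
      exact ⟨e, heE, h1, h2, huB _ h3⟩
    obtain ⟨ex, hexE, hex1, hex2, hex3⟩ := hedge x hx
    obtain ⟨ey, heyE, hey1, hey2, hey3⟩ := hedge y hy
    have hmx : ex ∈ G.E.filter fun e => e.2.1 = EdgeLabel.b i ∧ e.2.2 = xB :=
      Finset.mem_filter.2 ⟨hexE, hex2, hex3⟩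
    have hmy : ey ∈ G.E.filter fun e => e.2.1 = EdgeLabel.b i ∧ e.2.2 = xB :=
      Finset.mem_filter.2 ⟨heyE, hey2, hey3⟩
    rw [he₀, Finset.mem_singleton] at hmx hmy
    rw [← hex1, ← hey1, hmx, hmy]
  -- existence: for each i there is a node typed T i or F i
  have hex : ∀ i : Fin n, ∃ x : G.V, G.τ x = .T i ∨ G.τ x = .F i := by
    by_contra hcon
    push_neg at hcon
    obtain ⟨i₀, hi₀⟩ := hcon
    set sA : Finset G.V := Finset.univ.filter fun x => G.τ x = NodeType.A with hsA
    set sB : Finset G.V := Finset.univ.filter fun x => ∃ i, G.τ x = NodeType.B i with hsB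
    set sC : Finset G.V := Finset.univ.filter fun x => ∃ j, G.τ x = NodeType.C j with hsC
    set sTF : Finset G.V :=
      Finset.univ.filter fun x => ∃ i, G.τ x = NodeType.T i ∨ G.τ x = NodeType.F i with hsTF
    have hcover : (Finset.univ : Finset G.V) ⊆ sA ∪ sB ∪ sC ∪ sTF := by
      intro x _
      simp only [hsA, hsB, hsC, hsTF, Finset.mem_union, Finset.mem_filter,
        Finset.mem_univ, true_and]
      rcases h : G.τ x with _ | j | i | i | i
      · exact Or.inl (Or.inl (Or.inl rfl))
      · exact Or.inl (Or.inr ⟨j, rfl⟩)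
      · exact Or.inl (Or.inl (Or.inr ⟨i, rfl⟩))
      · exact Or.inr ⟨i, Or.inl rfl⟩
      · exact Or.inr ⟨i, Or.inr rfl⟩
    have hcB : sB.card = n := by
      have : sB = Finset.univ.biUnion
          (fun i : Fin n => Finset.univ.filter fun x : G.V => G.τ x = NodeType.B i) := by
        ext x
        simp [hsB]
      rw [this, Finset.card_biUnion]
      · simp [hG.unique_B]
      · intro i _ i' _ hne
        rw [Function.onFun, Finset.disjoint_left]
        intro x hx hx'
        rw [Finset.mem_filter] at hx hx'
        rw [hx.2] at hx'
        exact hne (by injection hx'.2)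
    have hcC : sC.card = k := by
      have : sC = Finset.univ.biUnion
          (fun j : Fin k => Finset.univ.filter fun x : G.V => G.τ x = NodeType.C j) := by
        ext x
        simp [hsC]
      rw [this, Finset.card_biUnion]
      · simp [hG.unique_C]
      · intro j _ j' _ hne
        rw [Function.onFun, Finset.disjoint_left]
        intro x hx hx'
        rw [Finset.mem_filter] at hx hx'
        rw [hx.2] at hx'
        exact hne (by injection hx'.2)
    have hcA : sA.card = 1 := hG.unique_A
    have htotal : Fintype.card G.V ≤ sA.card + sB.card + sC.card + sTF.card := by
      have h1 : (Finset.univ : Finset G.V).card ≤ (sA ∪ sB ∪ sC ∪ sTF).card :=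
        Finset.card_le_card hcover
      have h2 : (sA ∪ sB ∪ sC ∪ sTF).card ≤ (sA ∪ sB ∪ sC).card + sTF.card :=
        Finset.card_union_le _ _
      have h3 : (sA ∪ sB ∪ sC).card ≤ (sA ∪ sB).card + sC.card :=
        Finset.card_union_le _ _
      have h4 : (sA ∪ sB).card ≤ sA.card + sB.card := Finset.card_union_le _ _
      rw [Finset.card_univ] at h1
      omega
    have hlow : n ≤ sTF.card := by
      have := hG.card_nodes
      omega
    -- injective index map on sTF avoiding i₀
    have hup : sTF.card ≤ (Finset.univ.erase i₀).card := by
      apply Finset.card_le_card_of_injOn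
        (fun x => match G.τ x with
          | NodeType.T i => i
          | NodeType.F i => i
          | _ => i₀)
      · intro x hx
        rw [Finset.mem_coe, hsTF, Finset.mem_filter] at hx
        obtain ⟨-, i, hi⟩ := hx
        have hgi : (match G.τ x with
            | NodeType.T i => i
            | NodeType.F i => i
            | _ => i₀) = i := by
          rcases hi with hi | hi <;> rw [hi]
        dsimp only; rw [hgi]
        refine Finset.mem_erase.2 ⟨?_, Finset.mem_univ _⟩
        rintro rfl
        rcases hi with hi | hi
        · exact (hi₀ x).1 hi
        · exact (hi₀ x).2 hi
      · intro x hx y hy hxy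
        dsimp only at hxy
        simp only [Finset.mem_coe, hsTF, Finset.mem_filter] at hx hy
        obtain ⟨-, i, hi⟩ := hx
        obtain ⟨-, i', hi'⟩ := hy
        have hgi : (match G.τ x with
            | NodeType.T i => i
            | NodeType.F i => i
            | _ => i₀) = i := by
          rcases hi with hi | hi <;> rw [hi]
        have hgi' : (match G.τ y with
            | NodeType.T i => i
            | NodeType.F i => i
            | _ => i₀) = i' := by
          rcases hi' with hi' | hi' <;> rw [hi']
        have : i = i' := by rw [← hgi, ← hgi']; exact hxy
        subst this
        exact key i x y hi hi'
    have hup' : (Finset.univ.erase i₀).card = n - 1 := by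
      rw [Finset.card_erase_of_mem (Finset.mem_univ _), Finset.card_univ, Fintype.card_fin]
    have hn : 0 < n := i₀.pos
    omega
  choose nodeOf hnode using hex
  set v : Fin n → Bool := fun i => decide (G.τ (nodeOf i) = NodeType.T i) with hvdef
  have hvT : ∀ (i : Fin n) (x : G.V), G.τ x = .T i → v i = true := by
    intro i x hx
    have hxn : x = nodeOf i := key i x (nodeOf i) (Or.inl hx) (hnode i)
    rw [hxn] at hx
    simp [hvdef, hx]
  have hvF : ∀ (i : Fin n) (x : G.V), G.τ x = .F i → v i = false := by
    intro i x hx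
    have hxn : x = nodeOf i := key i x (nodeOf i) (Or.inr hx) (hnode i)
    rw [hxn] at hx
    simp [hvdef, hx]
  have hTv : ∀ i : Fin n, v i = true → G.τ (nodeOf i) = .T i := by
    intro i hvi
    rcases hnode i with h | h
    · exact h
    · rw [hvF i _ h] at hvi; cases hvi
  have hFv : ∀ i : Fin n, v i = false → G.τ (nodeOf i) = .F i := by
    intro i hvi
    rcases hnode i with h | h
    · rw [hvT i _ h] at hvi; cases hvi
    · exact h
  refine ⟨v, fun j => ?_⟩
  obtain ⟨xC, hxC, huC⟩ := hCex j
  have hcin := hG.C_in j xC hxC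
  rw [Finset.card_eq_one] at hcin
  obtain ⟨e₀, he₀⟩ := hcin
  obtain ⟨u₀, l₀, w₀⟩ := e₀
  have he₀mem : (u₀, l₀, w₀) ∈ G.E.filter
      fun e => e.2.1 = EdgeLabel.c j ∧ e.2.2 = xC := by
    rw [he₀]; exact Finset.mem_singleton_self _
  obtain ⟨he₀E, he₀l, he₀t⟩ := Finset.mem_filter.1 he₀mem
  dsimp only at he₀l he₀t
  subst he₀l
  -- for each true literal a, the unique c_j edge starts at nodeOf of its variable
  have hsrc : ∀ a : Fin 3, v (φ.clause j a).1 = (φ.clause j a).2 →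
      u₀ = nodeOf (φ.clause j a).1 := by
    intro a ha
    rcases hpol : (φ.clause j a).2 with _ | _
    · rw [hpol] at ha
      have hτ : G.τ (nodeOf (φ.clause j a).1) = .F (φ.clause j a).1 :=
        hFv _ ha
      have hocc : φ.occursNeg (φ.clause j a).1 j := ⟨a, Prod.ext rfl hpol⟩
      have hc := hG.F_out_c (nodeOf (φ.clause j a).1) _ hτ j hocc
      rw [Finset.card_eq_one] at hc
      obtain ⟨e, he⟩ := hc
      have hm : e ∈ G.E.filter fun e => e.1 = nodeOf (φ.clause j a).1 ∧
          e.2.1 = EdgeLabel.c j ∧ G.τ e.2.2 = NodeType.C j := by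
        rw [he]; exact Finset.mem_singleton_self _
      obtain ⟨heE, h1, h2, h3⟩ := Finset.mem_filter.1 hm
      have hin : e ∈ G.E.filter fun e => e.2.1 = EdgeLabel.c j ∧ e.2.2 = xC :=
        Finset.mem_filter.2 ⟨heE, h2, huC _ h3⟩
      rw [he₀, Finset.mem_singleton] at hin
      rw [← h1, hin]
    · rw [hpol] at ha
      have hτ : G.τ (nodeOf (φ.clause j a).1) = .T (φ.clause j a).1 :=
        hTv _ ha
      have hocc : φ.occursPos (φ.clause j a).1 j := ⟨a, Prod.ext rfl hpol⟩
      have hc := hG.T_out_c (nodeOf (φ.clause j a).1) _ hτ j hocc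
      rw [Finset.card_eq_one] at hc
      obtain ⟨e, he⟩ := hc
      have hm : e ∈ G.E.filter fun e => e.1 = nodeOf (φ.clause j a).1 ∧
          e.2.1 = EdgeLabel.c j ∧ G.τ e.2.2 = NodeType.C j := by
        rw [he]; exact Finset.mem_singleton_self _
      obtain ⟨heE, h1, h2, h3⟩ := Finset.mem_filter.1 hm
      have hin : e ∈ G.E.filter fun e => e.2.1 = EdgeLabel.c j ∧ e.2.2 = xC :=
        Finset.mem_filter.2 ⟨heE, h2, huC _ h3⟩
      rw [he₀, Finset.mem_singleton] at hin
      rw [← h1, hin]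
  -- existence of a true literal, from legality of the unique incoming edge
  have hlegal := hG.legal _ he₀E
  have hexa : ∃ a₀ : Fin 3, v (φ.clause j a₀).1 = (φ.clause j a₀).2 := by
    rcases hlegal with ⟨i, hT, ⟨a, ha⟩, -⟩ | ⟨i, hF, ⟨a, ha⟩, -⟩
    · refine ⟨a, ?_⟩
      rw [ha]
      exact hvT i u₀ hT
    · refine ⟨a, ?_⟩
      rw [ha]
      exact hvF i u₀ hF
  obtain ⟨a₀, ha₀⟩ := hexa
  rw [Finset.card_eq_one]
  refine ⟨a₀, ?_⟩
  ext a
  rw [Finset.mem_filter, Finset.mem_singleton]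
  constructor
  · rintro ⟨-, ha⟩
    have h1 := hsrc a ha
    have h2 := hsrc a₀ ha₀
    have hnn : nodeOf (φ.clause j a).1 = nodeOf (φ.clause j a₀).1 := by
      rw [← h1, ← h2]
    have hvar : (φ.clause j a).1 = (φ.clause j a₀).1 := by
      have ha' := hnode (φ.clause j a).1
      have ha₀' := hnode (φ.clause j a₀).1
      rw [hnn] at ha'
      rcases ha' with h | h <;> rcases ha₀' with h' | h' <;> rw [h] at h' <;>
        first
          | (injection h' with hv; exact hv)
          | injection h'
    exact φ.distinct j hvar
  · rintro rfl
    exact ⟨Finset.mem_univ _, ha₀⟩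

end OneInThreeAux


/-- A 3CNF formula `φ` has a 1-in-3 satisfying assignment iff some
edge-labeled typed graph satisfies the configuration `G_φ`. -/
theorem oneInThree_iff_exists_graph {n k : ℕ} (φ : CNF3 n k) :
    (∃ v : Fin n → Bool, φ.OneInThree v) ↔
      (∃ G : TypedGraph n k, SatisfiesConfig φ G) := by
  constructor
  · rintro ⟨v, hv⟩
    exact ⟨OneInThreeAux.Gr φ v, OneInThreeAux.forward hv⟩
  · rintro ⟨G, hG⟩
    exact OneInThreeAux.backward hG
end

section
/- Let φ be a 3CNF formula with n variables and k clauses over pairwise distinct variables per clause, and let v be a 1-in-3 satisfying assignment of φ. Then the following explicitly constructed graph satisfies the configuration G_φ: its node set consists of one node of type A, one node of type B_i for each i, one node of type C_j for each j, and, for each variable x_i, one valuation node of type T_i if v(x_i) is true and of type F_i otherwise; its edges are, for each i, a t_i-labeled (respectively f_i-labeled) edge from the A-node to the valuation node of x_i when v(x_i) is true (respectively false), a b_i-labeled edge from the valuation node of x_i to the B_i-node, and, for each clause C_j in which x_i occurs with the polarity chosen by v, a c_j-labeled edge from the valuation node of x_i to the C_j-node. -/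
/-- The nodes of the explicitly constructed graph: the `A`-node, one `B i`-node per
variable, one `C j`-node per clause, and for each variable `x i` a valuation node of
type `T i` if `v i` is true and of type `F i` otherwise. -/
def nodePresent {n k : ℕ} (v : Fin n → Bool) : NodeType n k → Bool
  | .T i => v i
  | .F i => !(v i)
  | _ => true

/-- The edges of the explicitly constructed graph: for each `i`, a `t i`-labeled
(resp. `f i`-labeled) edge from the `A`-node to the valuation node of `x i` when
`v i` is true (resp. false), a `b i`-labeled edge from the valuation node of `x i`
to the `B i`-node, and, for each clause `C j` in which `x i` occurs with the polarity
chosen by `v`, a `c j`-labeled edge from the valuation node of `x i` to the `C j`-node. -/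
def edgePresent {n k : ℕ} (φ : CNF3 n k) (v : Fin n → Bool)
    (src : NodeType n k) (l : EdgeLabel n k) (trg : NodeType n k) : Bool :=
  match src, l, trg with
  | .A, .t i, .T i' => v i && decide (i = i')
  | .A, .f i, .F i' => !(v i) && decide (i = i')
  | .T i, .b i', .B i'' => decide (i = i') && decide (i = i'')
  | .F i, .b i', .B i'' => decide (i = i') && decide (i = i'')
  | .T i, .c j, .C j' => decide (j = j') && decide (φ.occursPos i j)
  | .F i, .c j, .C j' => decide (j = j') && decide (φ.occursNeg i j)
  | _, _, _ => false

/-- The explicitly constructed graph encoding the assignment `v`. -/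
def explicitGraph {n k : ℕ} (φ : CNF3 n k) (v : Fin n → Bool) : TypedGraph n k where
  V := {t : NodeType n k // nodePresent v t = true}
  fin := inferInstance
  dec := inferInstance
  τ := fun x => x.1
  E := Finset.univ.filter
    fun e : {t : NodeType n k // nodePresent v t = true} × EdgeLabel n k ×
            {t : NodeType n k // nodePresent v t = true} =>
      edgePresent φ v e.1.1 e.2.1 e.2.2.1 = true

lemma edgePresent_iff {n k : ℕ} (φ : CNF3 n k) (v : Fin n → Bool)
    (s : NodeType n k) (l : EdgeLabel n k) (t : NodeType n k) :
    edgePresent φ v s l t = true ↔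
      (∃ i, v i = true ∧ s = .A ∧ l = .t i ∧ t = .T i) ∨
      (∃ i, v i = false ∧ s = .A ∧ l = .f i ∧ t = .F i) ∨
      (∃ i, s = .T i ∧ l = .b i ∧ t = .B i) ∨
      (∃ i, s = .F i ∧ l = .b i ∧ t = .B i) ∨
      (∃ i j, φ.occursPos i j ∧ s = .T i ∧ l = .c j ∧ t = .C j) ∨
      (∃ i j, φ.occursNeg i j ∧ s = .F i ∧ l = .c j ∧ t = .C j) := by
  cases s <;> cases l <;> cases t <;>
    simp [edgePresent, Bool.not_eq_true', and_assoc] <;> aesop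

lemma mem_E_iff {n k : ℕ} (φ : CNF3 n k) (v : Fin n → Bool)
    (e : (explicitGraph φ v).V × EdgeLabel n k × (explicitGraph φ v).V) :
    e ∈ (explicitGraph φ v).E ↔ edgePresent φ v e.1.1 e.2.1 e.2.2.1 = true := by
  simp [explicitGraph]
  exact Finset.mem_filter.trans (and_iff_right (Finset.mem_univ _))

def nodeEquiv {n k : ℕ} (v : Fin n → Bool) :
    {t : NodeType n k // nodePresent v t = true} ≃ (Unit ⊕ Fin k ⊕ Fin n ⊕ Fin n) where
  toFun x := match x.1 with
    | .A => .inl ()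
    | .C j => .inr (.inl j)
    | .B i => .inr (.inr (.inl i))
    | .T i => .inr (.inr (.inr i))
    | .F i => .inr (.inr (.inr i))
  invFun y := match y with
    | .inl _ => ⟨.A, rfl⟩
    | .inr (.inl j) => ⟨.C j, rfl⟩
    | .inr (.inr (.inl i)) => ⟨.B i, rfl⟩
    | .inr (.inr (.inr i)) =>
        if h : v i then ⟨.T i, by simp [nodePresent, h]⟩
        else ⟨.F i, by simp [nodePresent, h]⟩
  left_inv := by
    rintro ⟨x, hx⟩
    cases x with
    | T i => have h : v i = true := hx
             simp [h]
    | F i => have h : v i = false := by simpa [nodePresent] using hx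
             simp [h]
    | _ => rfl
  right_inv := by
    rintro (⟨⟩ | j | i | i) <;> try rfl
    · by_cases h : v i <;> simp [h]
/-- If `v` is a 1-in-3 satisfying assignment of `φ`, then the
explicitly constructed graph satisfies the configuration `G_φ`. -/
theorem explicitGraph_satisfiesConfig {n k : ℕ} (φ : CNF3 n k) (v : Fin n → Bool)
    (hv : φ.OneInThree v) : SatisfiesConfig φ (explicitGraph φ v) := by
  classical
  refine { card_nodes := ?_, unique_A := ?_, unique_B := ?_, unique_C := ?_,
           t_edges := ?_, t_once := ?_, f_edges := ?_, f_once := ?_,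
           T_out_c := ?_, T_out_b := ?_, F_out_c := ?_, F_out_b := ?_,
           B_in := ?_, C_in := ?_, legal := ?_ }
  · -- card_nodes
    have h := Fintype.card_congr (nodeEquiv (n := n) (k := k) v)
    simp only [Fintype.card_sum, Fintype.card_unit, Fintype.card_fin] at h
    show Fintype.card {t : NodeType n k // nodePresent v t = true} = 2 * n + k + 1
    omega
  · -- unique_A
    rw [Finset.card_eq_one]
    exact ⟨⟨.A, rfl⟩, by ext x; simp [explicitGraph, Subtype.ext_iff]; exact Finset.mem_filter.trans ((and_iff_right (Finset.mem_univ _)).trans ⟨fun h => Finset.mem_singleton.mpr (Subtype.ext h), fun h => congrArg Subtype.val (Finset.mem_singleton.mp h)⟩)⟩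
  · -- unique_B
    intro i
    rw [Finset.card_eq_one]
    exact ⟨⟨.B i, rfl⟩, by ext x; simp [explicitGraph, Subtype.ext_iff]; exact Finset.mem_filter.trans ((and_iff_right (Finset.mem_univ _)).trans ⟨fun h => Finset.mem_singleton.mpr (Subtype.ext h), fun h => congrArg Subtype.val (Finset.mem_singleton.mp h)⟩)⟩
  · -- unique_C
    intro j
    rw [Finset.card_eq_one]
    exact ⟨⟨.C j, rfl⟩, by ext x; simp [explicitGraph, Subtype.ext_iff]; exact Finset.mem_filter.trans ((and_iff_right (Finset.mem_univ _)).trans ⟨fun h => Finset.mem_singleton.mpr (Subtype.ext h), fun h => congrArg Subtype.val (Finset.mem_singleton.mp h)⟩)⟩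
  · -- t_edges
    intro e he i hl
    rw [mem_E_iff, edgePresent_iff] at he
    rcases he with ⟨i',_,h1,h2,h3⟩|⟨i',_,h1,h2,h3⟩|⟨i',h1,h2,h3⟩|⟨i',h1,h2,h3⟩|
      ⟨i',j',_,h1,h2,h3⟩|⟨i',j',_,h1,h2,h3⟩ <;> rw [hl] at h2 <;> cases h2 <;> exact ⟨h1, h3⟩
  · -- t_once
    intro i
    rw [Finset.card_le_one]
    rintro ⟨⟨a1,ha1⟩, al, ⟨a3,ha3⟩⟩ ha ⟨⟨b1,hb1⟩, bl, ⟨b3,hb3⟩⟩ hb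
    simp only [Finset.mem_filter, mem_E_iff, edgePresent_iff] at ha hb
    obtain ⟨hae, rfl⟩ := ha
    obtain ⟨hbe, rfl⟩ := hb
    rcases hae with ⟨i',_,rfl,heq,rfl⟩|⟨i',_,rfl,heq,rfl⟩|⟨i',rfl,heq,rfl⟩|⟨i',rfl,heq,rfl⟩|
      ⟨i',j',_,rfl,heq,rfl⟩|⟨i',j',_,rfl,heq,rfl⟩ <;> cases heq
    rcases hbe with ⟨i',_,rfl,heq,rfl⟩|⟨i',_,rfl,heq,rfl⟩|⟨i',rfl,heq,rfl⟩|⟨i',rfl,heq,rfl⟩|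
      ⟨i',j',_,rfl,heq,rfl⟩|⟨i',j',_,rfl,heq,rfl⟩ <;> cases heq
    rfl
  · -- f_edges
    intro e he i hl
    rw [mem_E_iff, edgePresent_iff] at he
    rcases he with ⟨i',_,h1,h2,h3⟩|⟨i',_,h1,h2,h3⟩|⟨i',h1,h2,h3⟩|⟨i',h1,h2,h3⟩|
      ⟨i',j',_,h1,h2,h3⟩|⟨i',j',_,h1,h2,h3⟩ <;> rw [hl] at h2 <;> cases h2 <;> exact ⟨h1, h3⟩
  · -- f_once
    intro i
    rw [Finset.card_le_one]
    rintro ⟨⟨a1,ha1⟩, al, ⟨a3,ha3⟩⟩ ha ⟨⟨b1,hb1⟩, bl, ⟨b3,hb3⟩⟩ hb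
    simp only [Finset.mem_filter, mem_E_iff, edgePresent_iff] at ha hb
    obtain ⟨hae, rfl⟩ := ha
    obtain ⟨hbe, rfl⟩ := hb
    rcases hae with ⟨i',_,rfl,heq,rfl⟩|⟨i',_,rfl,heq,rfl⟩|⟨i',rfl,heq,rfl⟩|⟨i',rfl,heq,rfl⟩|
      ⟨i',j',_,rfl,heq,rfl⟩|⟨i',j',_,rfl,heq,rfl⟩ <;> cases heq
    rcases hbe with ⟨i',_,rfl,heq,rfl⟩|⟨i',_,rfl,heq,rfl⟩|⟨i',rfl,heq,rfl⟩|⟨i',rfl,heq,rfl⟩|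
      ⟨i',j',_,rfl,heq,rfl⟩|⟨i',j',_,rfl,heq,rfl⟩ <;> cases heq
    rfl
  · -- T_out_c
    intro u i hu j hocc
    rw [Finset.card_eq_one]
    refine ⟨(u, .c j, ⟨.C j, rfl⟩), ?_⟩
    ext ⟨e1, el, e3⟩
    simp only [Finset.mem_filter, mem_E_iff, edgePresent_iff, Finset.mem_singleton,
      Prod.mk.injEq, Subtype.ext_iff]
    constructor
    · rintro ⟨_, rfl, rfl, he3⟩
      exact ⟨rfl, Prod.ext rfl (Subtype.ext he3)⟩
    · rintro ⟨rfl, rfl, rfl⟩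
      exact ⟨Or.inr (Or.inr (Or.inr (Or.inr (Or.inl ⟨i, j, hocc, hu, rfl, rfl⟩)))),
        rfl, rfl, rfl⟩
  · -- T_out_b
    intro u i hu
    rw [Finset.card_eq_one]
    refine ⟨(u, .b i, ⟨.B i, rfl⟩), ?_⟩
    ext ⟨e1, el, e3⟩
    simp only [Finset.mem_filter, mem_E_iff, edgePresent_iff, Finset.mem_singleton,
      Prod.mk.injEq, Subtype.ext_iff]
    constructor
    · rintro ⟨_, rfl, rfl, he3⟩
      exact ⟨rfl, Prod.ext rfl (Subtype.ext he3)⟩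
    · rintro ⟨rfl, rfl, rfl⟩
      exact ⟨Or.inr (Or.inr (Or.inl ⟨i, hu, rfl, rfl⟩)), rfl, rfl, rfl⟩
  · -- F_out_c
    intro u i hu j hocc
    rw [Finset.card_eq_one]
    refine ⟨(u, .c j, ⟨.C j, rfl⟩), ?_⟩
    ext ⟨e1, el, e3⟩
    simp only [Finset.mem_filter, mem_E_iff, edgePresent_iff, Finset.mem_singleton,
      Prod.mk.injEq, Subtype.ext_iff]
    constructor
    · rintro ⟨_, rfl, rfl, he3⟩
      exact ⟨rfl, Prod.ext rfl (Subtype.ext he3)⟩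
    · rintro ⟨rfl, rfl, rfl⟩
      exact ⟨Or.inr (Or.inr (Or.inr (Or.inr (Or.inr ⟨i, j, hocc, hu, rfl, rfl⟩)))),
        rfl, rfl, rfl⟩
  · -- F_out_b
    intro u i hu
    rw [Finset.card_eq_one]
    refine ⟨(u, .b i, ⟨.B i, rfl⟩), ?_⟩
    ext ⟨e1, el, e3⟩
    simp only [Finset.mem_filter, mem_E_iff, edgePresent_iff, Finset.mem_singleton,
      Prod.mk.injEq, Subtype.ext_iff]
    constructor
    · rintro ⟨_, rfl, rfl, he3⟩
      exact ⟨rfl, Prod.ext rfl (Subtype.ext he3)⟩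
    · rintro ⟨rfl, rfl, rfl⟩
      exact ⟨Or.inr (Or.inr (Or.inr (Or.inl ⟨i, hu, rfl, rfl⟩))), rfl, rfl, rfl⟩
  · -- B_in
    intro i x hx
    rw [Finset.card_eq_one]
    by_cases hvi : v i = true
    · refine ⟨(⟨.T i, by simp [nodePresent, hvi]⟩, .b i, x), ?_⟩
      ext ⟨e1, el, e3⟩
      simp only [Finset.mem_filter, mem_E_iff, edgePresent_iff, Finset.mem_singleton,
        Prod.mk.injEq]
      constructor
      · rintro ⟨hp, rfl, rfl⟩
        rcases hp with ⟨i',_,h1,heq,h3⟩|⟨i',_,h1,heq,h3⟩|⟨i',h1,heq,h3⟩|⟨i',h1,heq,h3⟩|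
          ⟨i',j',_,h1,heq,h3⟩|⟨i',j',_,h1,heq,h3⟩ <;> cases heq
        · exact Prod.ext (Subtype.ext h1) rfl
        · have := e1.2
          rw [h1] at this
          simp [nodePresent, hvi] at this
      · rintro ⟨rfl, rfl, rfl⟩
        exact ⟨Or.inr (Or.inr (Or.inl ⟨i, rfl, rfl, hx⟩)), rfl, rfl⟩
    · refine ⟨(⟨.F i, by simp [nodePresent, hvi]⟩, .b i, x), ?_⟩
      ext ⟨e1, el, e3⟩
      simp only [Finset.mem_filter, mem_E_iff, edgePresent_iff, Finset.mem_singleton,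
        Prod.mk.injEq]
      constructor
      · rintro ⟨hp, rfl, rfl⟩
        rcases hp with ⟨i',_,h1,heq,h3⟩|⟨i',_,h1,heq,h3⟩|⟨i',h1,heq,h3⟩|⟨i',h1,heq,h3⟩|
          ⟨i',j',_,h1,heq,h3⟩|⟨i',j',_,h1,heq,h3⟩ <;> cases heq
        · have := e1.2
          rw [h1] at this
          simp [nodePresent, hvi] at this
        · exact Prod.ext (Subtype.ext h1) rfl
      · rintro ⟨rfl, rfl, rfl⟩
        exact ⟨Or.inr (Or.inr (Or.inr (Or.inl ⟨i, rfl, rfl, hx⟩))), rfl, rfl⟩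
  · -- C_in
    intro j x hx
    have h := hv j
    rw [Finset.card_eq_one] at h
    obtain ⟨a, ha⟩ := h
    have hmem : v (φ.clause j a).1 = (φ.clause j a).2 := by
      have := Finset.mem_singleton_self a
      rw [← ha] at this
      simpa using this
    have huniq : ∀ a', v (φ.clause j a').1 = (φ.clause j a').2 → a' = a := by
      intro a' h'
      have : a' ∈ Finset.univ.filter
          (fun b : Fin 3 => v (φ.clause j b).1 = (φ.clause j b).2) := by
        simp [h']
      rw [ha] at this
      simpa using this
    rw [Finset.card_eq_one]
    cases hb : (φ.clause j a).2 with
    | true =>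
      have hvi : v (φ.clause j a).1 = true := hmem.trans hb
      refine ⟨(⟨.T (φ.clause j a).1, by simp [nodePresent, hvi]⟩, .c j, x), ?_⟩
      ext ⟨e1, el, e3⟩
      simp only [Finset.mem_filter, mem_E_iff, edgePresent_iff, Finset.mem_singleton,
        Prod.mk.injEq]
      constructor
      · rintro ⟨hp, rfl, rfl⟩
        rcases hp with ⟨i',_,h1,heq,h3⟩|⟨i',_,h1,heq,h3⟩|⟨i',h1,heq,h3⟩|⟨i',h1,heq,h3⟩|
          ⟨i',j',⟨a',hca'⟩,h1,heq,h3⟩|⟨i',j',⟨a',hca'⟩,h1,heq,h3⟩ <;> cases heq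
        · have hvi' : v i' = true := by
            have := e1.2
            rw [h1] at this
            simpa [nodePresent] using this
          have hsat : v (φ.clause j a').1 = (φ.clause j a').2 := by rw [hca']; exact hvi'
          have := huniq a' hsat
          subst this
          have hi : i' = (φ.clause j a').1 := by rw [hca']
          subst hi
          exact Prod.ext (Subtype.ext h1) rfl
        · have hvi' : v i' = false := by
            have := e1.2
            rw [h1] at this
            simpa [nodePresent] using this
          have hsat : v (φ.clause j a').1 = (φ.clause j a').2 := by rw [hca']; exact hvi'
          have := huniq a' hsat
          subst this
          rw [hca'] at hb
          simp at hb
      · rintro ⟨rfl, rfl, rfl⟩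
        exact ⟨Or.inr (Or.inr (Or.inr (Or.inr (Or.inl
          ⟨(φ.clause j a).1, j, ⟨a, Prod.ext rfl hb⟩, rfl, rfl, hx⟩)))), rfl, rfl⟩
    | false =>
      have hvi : v (φ.clause j a).1 = false := hmem.trans hb
      refine ⟨(⟨.F (φ.clause j a).1, by simp [nodePresent, hvi]⟩, .c j, x), ?_⟩
      ext ⟨e1, el, e3⟩
      simp only [Finset.mem_filter, mem_E_iff, edgePresent_iff, Finset.mem_singleton,
        Prod.mk.injEq]
      constructor
      · rintro ⟨hp, rfl, rfl⟩
        rcases hp with ⟨i',_,h1,heq,h3⟩|⟨i',_,h1,heq,h3⟩|⟨i',h1,heq,h3⟩|⟨i',h1,heq,h3⟩|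
          ⟨i',j',⟨a',hca'⟩,h1,heq,h3⟩|⟨i',j',⟨a',hca'⟩,h1,heq,h3⟩ <;> cases heq
        · have hvi' : v i' = true := by
            have := e1.2
            rw [h1] at this
            simpa [nodePresent] using this
          have hsat : v (φ.clause j a').1 = (φ.clause j a').2 := by rw [hca']; exact hvi'
          have := huniq a' hsat
          subst this
          rw [hca'] at hb
          simp at hb
        · have hvi' : v i' = false := by
            have := e1.2
            rw [h1] at this
            simpa [nodePresent] using this
          have hsat : v (φ.clause j a').1 = (φ.clause j a').2 := by rw [hca']; exact hvi'
          have := huniq a' hsat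
          subst this
          have hi : i' = (φ.clause j a').1 := by rw [hca']
          subst hi
          exact Prod.ext (Subtype.ext h1) rfl
      · rintro ⟨rfl, rfl, rfl⟩
        exact ⟨Or.inr (Or.inr (Or.inr (Or.inr (Or.inr
          ⟨(φ.clause j a).1, j, ⟨a, Prod.ext rfl hb⟩, rfl, rfl, hx⟩)))), rfl, rfl⟩
  · -- legal
    rintro ⟨e1, el, e3⟩ he
    rw [mem_E_iff, edgePresent_iff] at he
    rcases he with ⟨i,hvi,h1,rfl,h3⟩|⟨i,hvi,h1,rfl,h3⟩|⟨i,h1,rfl,h3⟩|⟨i,h1,rfl,h3⟩|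
      ⟨i,j,ho,h1,rfl,h3⟩|⟨i,j,ho,h1,rfl,h3⟩
    · exact ⟨h1, h3⟩
    · exact ⟨h1, h3⟩
    · exact ⟨Or.inl h1, h3⟩
    · exact ⟨Or.inr h1, h3⟩
    · exact Or.inl ⟨i, h1, ho, h3⟩
    · exact Or.inr ⟨i, h1, ho, h3⟩
end

section
/- Let φ be a 3CNF formula with n variables and k clauses over pairwise distinct variables per clause, and suppose some edge-labeled typed graph satisfies the configuration G_φ. Then the assignment v defined by v(x_i) = true if and only if the graph contains a node of type T_i is a 1-in-3 satisfying assignment of φ, i.e., every clause of φ contains exactly one literal made true by v. -/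
private lemma exists_unique_of_card_one {α : Type*} {s : Finset α} (hs : s.card = 1) :
    ∃ a ∈ s, ∀ b ∈ s, b = a := by
  obtain ⟨a, rfl⟩ := Finset.card_eq_one.mp hs
  exact ⟨a, Finset.mem_singleton_self a, fun b hb => Finset.mem_singleton.mp hb⟩

/-- If a graph satisfies the configuration `G_φ`, then the assignment
`v` with `v (x i) = true` iff the graph contains a node of type `T i` is a 1-in-3
satisfying assignment of `φ`. -/
theorem satisfiesConfig_oneInThree {n k : ℕ} (φ : CNF3 n k) (G : TypedGraph n k)
    (h : SatisfiesConfig φ G) :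
    φ.OneInThree (fun i : Fin n => decide (∃ x : G.V, G.τ x = NodeType.T i)) := by
  classical
  set v : Fin n → Bool := fun i : Fin n => decide (∃ x : G.V, G.τ x = NodeType.T i) with hv
  -- for each i there is a node of type T i or of type F i
  have hTF : ∀ i : Fin n,
      (∃ u : G.V, G.τ u = NodeType.T i) ∨ (∃ u : G.V, G.τ u = NodeType.F i) := by
    intro i
    obtain ⟨y, hymem, -⟩ := exists_unique_of_card_one (h.unique_B i)
    rw [Finset.mem_filter] at hymem
    obtain ⟨⟨u, lab, w⟩, hemem, -⟩ := exists_unique_of_card_one (h.B_in i y hymem.2)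
    rw [Finset.mem_filter] at hemem
    obtain ⟨heE, hlab, -⟩ := hemem
    cases hlab
    have hleg := h.legal _ heE
    rcases hleg.1 with hT | hF
    · exact Or.inl ⟨u, hT⟩
    · exact Or.inr ⟨u, hF⟩
  -- there cannot be both a T i node and an F i node
  have hnotBoth : ∀ i : Fin n, (∃ u : G.V, G.τ u = NodeType.T i) →
      (∃ u : G.V, G.τ u = NodeType.F i) → False := by
    intro i ⟨u, hu⟩ ⟨w, hw⟩
    obtain ⟨y, hymem, hyuniq⟩ := exists_unique_of_card_one (h.unique_B i)
    rw [Finset.mem_filter] at hymem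
    obtain ⟨e1, he1mem, -⟩ := exists_unique_of_card_one (h.T_out_b u i hu)
    obtain ⟨e2, he2mem, -⟩ := exists_unique_of_card_one (h.F_out_b w i hw)
    rw [Finset.mem_filter] at he1mem he2mem
    obtain ⟨e, hemem, heu⟩ := exists_unique_of_card_one (h.B_in i y hymem.2)
    have hy1 : e1.2.2 = y := hyuniq _ (Finset.mem_filter.mpr
      ⟨Finset.mem_univ _, he1mem.2.2.2⟩)
    have hy2 : e2.2.2 = y := hyuniq _ (Finset.mem_filter.mpr
      ⟨Finset.mem_univ _, he2mem.2.2.2⟩)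
    have h1 : e1 = e := heu _ (Finset.mem_filter.mpr ⟨he1mem.1, he1mem.2.2.1, hy1⟩)
    have h2 : e2 = e := heu _ (Finset.mem_filter.mpr ⟨he2mem.1, he2mem.2.2.1, hy2⟩)
    have : u = w := by rw [← he1mem.2.1, ← he2mem.2.1, h1, h2]
    rw [this, hw] at hu
    exact absurd hu (by simp)
  intro j
  -- the unique C j node
  obtain ⟨xC, hxCmem, hxCuniq⟩ := exists_unique_of_card_one (h.unique_C j)
  rw [Finset.mem_filter] at hxCmem
  have hCuniq : ∀ y : G.V, G.τ y = NodeType.C j → y = xC := fun y hy =>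
    hxCuniq y (Finset.mem_filter.mpr ⟨Finset.mem_univ y, hy⟩)
  -- the unique incoming c j edge
  obtain ⟨⟨u0, lab0, w0⟩, he0mem, he0u⟩ :=
    exists_unique_of_card_one (h.C_in j xC hxCmem.2)
  rw [Finset.mem_filter] at he0mem
  obtain ⟨he0E, he0lab, he0tgt⟩ := he0mem
  cases he0lab
  have he0uniq : ∀ e ∈ G.E, e.2.1 = EdgeLabel.c j → G.τ e.2.2 = NodeType.C j →
      e = (u0, EdgeLabel.c j, w0) := by
    intro e heE hlab htgt
    exact he0u e (Finset.mem_filter.mpr ⟨heE, hlab, hCuniq _ htgt⟩)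
  -- every true literal of clause j forces the source type of the unique c j edge
  have key : ∀ b : Fin 3, v (φ.clause j b).1 = (φ.clause j b).2 →
      (G.τ u0 = NodeType.T (φ.clause j b).1 ∧ (φ.clause j b).2 = true) ∨
      (G.τ u0 = NodeType.F (φ.clause j b).1 ∧ (φ.clause j b).2 = false) := by
    intro b hb
    cases hp : (φ.clause j b).2 with
    | false =>
      rw [hp] at hb
      have hnoT : ¬ ∃ x : G.V, G.τ x = NodeType.T (φ.clause j b).1 := by
        simpa [hv] using hb
      obtain ⟨w, hw⟩ := (hTF _).resolve_left hnoT
      have hocc : φ.occursNeg (φ.clause j b).1 j := ⟨b, by rw [← hp]⟩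
      obtain ⟨e, hemem, -⟩ := exists_unique_of_card_one (h.F_out_c w _ hw j hocc)
      rw [Finset.mem_filter] at hemem
      have he := he0uniq _ hemem.1 hemem.2.2.1 hemem.2.2.2
      refine Or.inr ⟨?_, rfl⟩
      have : e.1 = u0 := by rw [he]
      rw [← this, hemem.2.1, hw]
    | true =>
      rw [hp] at hb
      have hT : ∃ x : G.V, G.τ x = NodeType.T (φ.clause j b).1 := by
        simpa [hv] using hb
      obtain ⟨u, hu⟩ := hT
      have hocc : φ.occursPos (φ.clause j b).1 j := ⟨b, by rw [← hp]⟩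
      obtain ⟨e, hemem, -⟩ := exists_unique_of_card_one (h.T_out_c u _ hu j hocc)
      rw [Finset.mem_filter] at hemem
      have he := he0uniq _ hemem.1 hemem.2.2.1 hemem.2.2.2
      refine Or.inl ⟨?_, rfl⟩
      have : e.1 = u0 := by rw [he]
      rw [← this, hemem.2.1, hu]
  -- the unique c j edge is legal, giving the witness literal
  have hleg : LegalEdge φ G (u0, EdgeLabel.c j, w0) := h.legal _ he0E
  rcases hleg with ⟨i, hT, ⟨a, ha⟩, -⟩ | ⟨i, hF, ⟨a, ha⟩, -⟩
  · -- source is a T i node, literal (i, true)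
    have hamem : v (φ.clause j a).1 = (φ.clause j a).2 := by
      rw [ha]; simp [hv]; exact ⟨u0, hT⟩
    refine Finset.card_eq_one.mpr ⟨a, Finset.eq_singleton_iff_unique_mem.mpr
      ⟨Finset.mem_filter.mpr ⟨Finset.mem_univ a, hamem⟩, ?_⟩⟩
    intro b hbmem
    rw [Finset.mem_filter] at hbmem
    have hvar : (φ.clause j b).1 = (φ.clause j a).1 := by
      rcases key b hbmem.2 with ⟨hTb, -⟩ | ⟨hFb, -⟩
      · rw [hT] at hTb
        have : i = (φ.clause j b).1 := by injection hTb
        rw [← this, ha]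
      · rw [hT] at hFb; exact absurd hFb (by simp)
    exact φ.distinct j hvar
  · -- source is an F i node, literal (i, false)
    have hamem : v (φ.clause j a).1 = (φ.clause j a).2 := by
      rw [ha]
      simp only [hv]
      simp only [decide_eq_false_iff_not]
      exact fun hTex => hnotBoth i hTex ⟨u0, hF⟩
    refine Finset.card_eq_one.mpr ⟨a, Finset.eq_singleton_iff_unique_mem.mpr
      ⟨Finset.mem_filter.mpr ⟨Finset.mem_univ a, hamem⟩, ?_⟩⟩
    intro b hbmem
    rw [Finset.mem_filter] at hbmem
    have hvar : (φ.clause j b).1 = (φ.clause j a).1 := by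
      rcases key b hbmem.2 with ⟨hTb, -⟩ | ⟨hFb, -⟩
      · rw [hF] at hTb; exact absurd hTb (by simp)
      · rw [hF] at hFb
        have : i = (φ.clause j b).1 := by injection hFb
        rw [← this, ha]
    exact φ.distinct j hvar
end

section
/- Let φ be a 3CNF formula with n variables and k clauses over pairwise distinct variables per clause. In every edge-labeled typed graph satisfying the configuration G_φ, for each variable index i with 1 ≤ i ≤ n there is exactly one node whose type belongs to {T_i, F_i}; in particular, for each i the graph contains a node of type T_i or a node of type F_i, but not both, and not more than one of either. -/
/-- In every graph satisfying the configuration `G_φ`, for each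
variable index `i` there is exactly one node whose type belongs to `{T i, F i}`; in
particular there is a node of type `T i` or of type `F i`, but not both, and not more
than one of either. -/
theorem unique_valuation_node {n k : ℕ} (φ : CNF3 n k) (G : TypedGraph n k)
    (h : SatisfiesConfig φ G) :
    ∀ i : Fin n,
      (Finset.univ.filter
        fun x : G.V => G.τ x = NodeType.T i ∨ G.τ x = NodeType.F i).card = 1 ∧
      ((∃ x : G.V, G.τ x = NodeType.T i) ∨ (∃ x : G.V, G.τ x = NodeType.F i)) ∧
      ¬ ((∃ x : G.V, G.τ x = NodeType.T i) ∧ (∃ x : G.V, G.τ x = NodeType.F i)) ∧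
      (Finset.univ.filter fun x : G.V => G.τ x = NodeType.T i).card ≤ 1 ∧
      (Finset.univ.filter fun x : G.V => G.τ x = NodeType.F i).card ≤ 1 := by

  intro i
  classical
  obtain ⟨x, hx⟩ := Finset.card_eq_one.mp (h.unique_B i)
  have hxB : G.τ x = NodeType.B i := by
    have : x ∈ Finset.univ.filter fun y : G.V => G.τ y = NodeType.B i := by
      rw [hx]; exact Finset.mem_singleton_self x
    simpa using this
  set Eb := G.E.filter (fun e => e.2.1 = EdgeLabel.b i) with hEb
  have hEbcard : Eb.card = 1 := by
    have heq : Eb = G.E.filter fun e => e.2.1 = EdgeLabel.b i ∧ e.2.2 = x := by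
      ext e
      simp only [hEb, Finset.mem_filter]
      constructor
      · rintro ⟨he, hl⟩
        refine ⟨he, hl, ?_⟩
        have hleg := h.legal e he
        unfold LegalEdge at hleg
        rw [hl] at hleg
        have hmem : e.2.2 ∈ Finset.univ.filter fun y : G.V => G.τ y = NodeType.B i := by
          simp [hleg.2]
        rw [hx] at hmem; simpa using hmem
      · rintro ⟨he, hl, _⟩; exact ⟨he, hl⟩
    rw [heq]; exact h.B_in i x hxB
  set S := Finset.univ.filter
    (fun y : G.V => G.τ y = NodeType.T i ∨ G.τ y = NodeType.F i) with hS
  have hmemS : ∀ e ∈ Eb, e.1 ∈ S := by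
    intro e he
    rw [hEb, Finset.mem_filter] at he
    have hleg := h.legal e he.1
    unfold LegalEdge at hleg
    rw [he.2] at hleg
    simp only [hS, Finset.mem_filter, Finset.mem_univ, true_and]
    exact hleg.1
  have hsum := Finset.card_eq_sum_card_fiberwise hmemS
  have hfiber : ∀ u ∈ S, (Eb.filter fun e => e.1 = u).card = 1 := by
    intro u hu
    have hequ : Eb.filter (fun e => e.1 = u)
        = G.E.filter fun e =>
            e.1 = u ∧ e.2.1 = EdgeLabel.b i ∧ G.τ e.2.2 = NodeType.B i := by
      ext e
      simp only [hEb, Finset.mem_filter, and_assoc]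
      constructor
      · rintro ⟨he, hl, h1⟩
        refine ⟨he, h1, hl, ?_⟩
        have hleg := h.legal e he
        unfold LegalEdge at hleg
        rw [hl] at hleg
        exact hleg.2
      · rintro ⟨he, h1, hl, _⟩; exact ⟨he, hl, h1⟩
    rw [hS, Finset.mem_filter] at hu
    rcases hu.2 with ht | hf
    · rw [hequ]; exact h.T_out_b u i ht
    · rw [hequ]; exact h.F_out_b u i hf
  have hScard : S.card = 1 := by
    rw [Finset.sum_congr rfl hfiber, Finset.sum_const, smul_eq_mul, mul_one] at hsum
    omega
  obtain ⟨w, hw⟩ := Finset.card_eq_one.mp hScard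
  have hwS : w ∈ S := by rw [hw]; exact Finset.mem_singleton_self w
  have hwTF : G.τ w = NodeType.T i ∨ G.τ w = NodeType.F i := by
    rw [hS, Finset.mem_filter] at hwS; exact hwS.2
  refine ⟨hScard, ?_, ?_, ?_, ?_⟩
  · rcases hwTF with ht | hf
    · exact Or.inl ⟨w, ht⟩
    · exact Or.inr ⟨w, hf⟩
  · rintro ⟨⟨y, hy⟩, ⟨z, hz⟩⟩
    have hyS : y ∈ S := by
      rw [hS, Finset.mem_filter]; exact ⟨Finset.mem_univ _, Or.inl hy⟩
    have hzS : z ∈ S := by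
      rw [hS, Finset.mem_filter]; exact ⟨Finset.mem_univ _, Or.inr hz⟩
    rw [hw, Finset.mem_singleton] at hyS hzS
    subst hyS; subst hzS
    rw [hy] at hz; cases hz
  · refine le_trans (Finset.card_le_card ?_) hScard.le
    intro y hy
    rw [Finset.mem_filter] at hy
    rw [hS, Finset.mem_filter]
    exact ⟨hy.1, Or.inl hy.2⟩
  · refine le_trans (Finset.card_le_card ?_) hScard.le
    intro y hy
    rw [Finset.mem_filter] at hy
    rw [hS, Finset.mem_filter]
    exact ⟨hy.1, Or.inr hy.2⟩
end

section
/- Let φ be a 3CNF formula with n variables and k clauses over pairwise distinct variables per clause, let a graph satisfy the configuration G_φ, and define the assignment v by v(x_i) = true if and only if the graph contains a node of type T_i. Then for each clause C_j, the number of incoming c_j-labeled edges at the unique node of type C_j equals the number of literals of C_j made true by v. -/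
/-- Auxiliary equivalence enumerating the node types. -/
def ntEquiv (n k : ℕ) : NodeType n k ≃ (Unit ⊕ Fin k ⊕ Fin n ⊕ Fin n ⊕ Fin n) where
  toFun θ := match θ with
    | .A => .inl ()
    | .C j => .inr (.inl j)
    | .B i => .inr (.inr (.inl i))
    | .T i => .inr (.inr (.inr (.inl i)))
    | .F i => .inr (.inr (.inr (.inr i)))
  invFun s := match s with
    | .inl _ => .A
    | .inr (.inl j) => .C j
    | .inr (.inr (.inl i)) => .B i
    | .inr (.inr (.inr (.inl i))) => .T i
    | .inr (.inr (.inr (.inr i))) => .F i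
  left_inv θ := by cases θ <;> rfl
  right_inv s := by rcases s with _ | (_ | (_ | (_ | _))) <;> rfl

/-- For each variable, there is exactly one node of type `T i` or `F i`. -/
theorem unique_TF {n k : ℕ} (φ : CNF3 n k) (G : TypedGraph n k)
    (h : SatisfiesConfig φ G) (i : Fin n) :
    (Finset.univ.filter fun u : G.V =>
      G.τ u = NodeType.T i ∨ G.τ u = NodeType.F i).card = 1 := by
  classical
  set S : Fin n → Finset G.V := fun i =>
    Finset.univ.filter fun u => G.τ u = NodeType.T i ∨ G.τ u = NodeType.F i with hSdef
  -- each S i has at most one element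
  have hSle : ∀ i, (S i).card ≤ 1 := by
    intro i
    obtain ⟨b0, hb0⟩ := Finset.card_eq_one.mp (h.unique_B i)
    have hBuniq : ∀ z : G.V, G.τ z = NodeType.B i → z = b0 := by
      intro z hz
      have : z ∈ Finset.univ.filter fun x : G.V => G.τ x = NodeType.B i := by
        simp [hz]
      rw [hb0] at this; simpa using this
    have hsub : S i ⊆ (G.E.filter fun e => e.2.1 = EdgeLabel.b i ∧ e.2.2 = b0).image
        (fun e => e.1) := by
      intro u hu
      have hu' : G.τ u = NodeType.T i ∨ G.τ u = NodeType.F i := by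
        simpa [hSdef] using hu
      have hone : (G.E.filter fun e => e.1 = u ∧ e.2.1 = EdgeLabel.b i ∧
          G.τ e.2.2 = NodeType.B i).card = 1 := by
        rcases hu' with hT | hF
        · exact h.T_out_b u i hT
        · exact h.F_out_b u i hF
      obtain ⟨e, he⟩ := Finset.card_eq_one.mp hone
      have hemem : e ∈ G.E.filter fun e => e.1 = u ∧ e.2.1 = EdgeLabel.b i ∧
          G.τ e.2.2 = NodeType.B i := by rw [he]; exact Finset.mem_singleton_self e
      rw [Finset.mem_filter] at hemem
      obtain ⟨heE, he1, he2, he3⟩ := hemem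
      refine Finset.mem_image.mpr ⟨e, ?_, he1⟩
      exact Finset.mem_filter.mpr ⟨heE, he2, hBuniq _ he3⟩
    calc (S i).card ≤ _ := Finset.card_le_card hsub
      _ ≤ (G.E.filter fun e => e.2.1 = EdgeLabel.b i ∧ e.2.2 = b0).card :=
          Finset.card_image_le
      _ = 1 := by
          refine h.B_in i b0 ?_
          have : b0 ∈ Finset.univ.filter fun x : G.V => G.τ x = NodeType.B i := by
            rw [hb0]; exact Finset.mem_singleton_self b0
          simpa using this
  -- counting all nodes
  have hcount : Fintype.card G.V =
      ∑ θ : NodeType n k, (Finset.univ.filter fun u : G.V => G.τ u = θ).card :=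
    Finset.card_eq_sum_card_fiberwise (fun u _ => Finset.mem_univ (G.τ u))
  have hsum : ∑ θ : NodeType n k, (Finset.univ.filter fun u : G.V => G.τ u = θ).card =
      1 + (k + (n + (∑ i : Fin n, (Finset.univ.filter fun u : G.V =>
        G.τ u = NodeType.T i).card + ∑ i : Fin n, (Finset.univ.filter fun u : G.V =>
        G.τ u = NodeType.F i).card))) := by
    rw [Fintype.sum_equiv (ntEquiv n k)
      (fun θ => (Finset.univ.filter fun u : G.V => G.τ u = θ).card)
      (fun s => (Finset.univ.filter fun u : G.V =>
        G.τ u = (ntEquiv n k).symm s).card)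
      (fun θ => by simp)]
    rw [Fintype.sum_sum_type, Fintype.sum_sum_type, Fintype.sum_sum_type,
      Fintype.sum_sum_type]
    simp only [show ∀ x, (ntEquiv n k).symm (Sum.inl x) = NodeType.A from fun _ => rfl,
      show ∀ x, (ntEquiv n k).symm (Sum.inr (Sum.inl x)) = NodeType.C x from fun _ => rfl,
      show ∀ x, (ntEquiv n k).symm (Sum.inr (Sum.inr (Sum.inl x))) = NodeType.B x from fun _ => rfl,
      show ∀ x, (ntEquiv n k).symm (Sum.inr (Sum.inr (Sum.inr (Sum.inl x)))) = NodeType.T x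
        from fun _ => rfl,
      show ∀ x, (ntEquiv n k).symm (Sum.inr (Sum.inr (Sum.inr (Sum.inr x)))) = NodeType.F x
        from fun _ => rfl]
    simp [ntEquiv, h.unique_A, h.unique_C, h.unique_B]
  have hTF : ∀ i : Fin n, (S i).card =
      (Finset.univ.filter fun u : G.V => G.τ u = NodeType.T i).card +
      (Finset.univ.filter fun u : G.V => G.τ u = NodeType.F i).card := by
    intro i
    simp only [hSdef]
    rw [Finset.filter_or]
    refine Finset.card_union_of_disjoint ?_
    refine Finset.disjoint_filter_filter' _ _ ?_
    intro p hp1 hp2 u hu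
    have h1 := hp1 u hu
    have h2 := hp2 u hu
    simp only at h1 h2
    rw [h1] at h2
    exact absurd h2 (by simp)
  have hsumS : ∑ i : Fin n, (S i).card = n := by
    have := h.card_nodes
    rw [hcount, hsum] at this
    have h2 : ∑ i : Fin n, (S i).card =
        ∑ i : Fin n, (Finset.univ.filter fun u : G.V => G.τ u = NodeType.T i).card +
        ∑ i : Fin n, (Finset.univ.filter fun u : G.V => G.τ u = NodeType.F i).card := by
      rw [← Finset.sum_add_distrib]
      exact Finset.sum_congr rfl fun i _ => hTF i
    omega
  -- conclude each S i has exactly one element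
  by_contra hne
  have hi0 : (S i).card = 0 := by
    have := hSle i
    have hne' : (S i).card ≠ 1 := fun hc => hne (by simpa [hSdef] using hc)
    omega
  have hlt : ∑ i : Fin n, (S i).card < ∑ _i : Fin n, 1 :=
    Finset.sum_lt_sum (fun i _ => hSle i) ⟨i, Finset.mem_univ i, by omega⟩
  simp [hsumS] at hlt

/-- Let a graph satisfy the configuration `G_φ`, and let `v` be the
assignment with `v (x i) = true` iff the graph contains a node of type `T i`. Then for
each clause `C j`, the number of incoming `c j`-labeled edges at the unique node of
type `C j` equals the number of literals of `C j` made true by `v`. -/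
theorem incoming_cEdges_eq_true_literals {n k : ℕ} (φ : CNF3 n k) (G : TypedGraph n k)
    (h : SatisfiesConfig φ G) :
    ∀ j : Fin k, ∀ x : G.V, G.τ x = NodeType.C j →
      (G.E.filter fun e => e.2.1 = EdgeLabel.c j ∧ e.2.2 = x).card =
        (Finset.univ.filter fun a : Fin 3 =>
          (decide (∃ y : G.V, G.τ y = NodeType.T (φ.clause j a).1)) =
            (φ.clause j a).2).card := by
  classical
  intro j x hx
  -- the chosen T/F node for each variable
  have hS : ∀ i : Fin n, ∃ u : G.V, (Finset.univ.filter fun u : G.V =>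
      G.τ u = NodeType.T i ∨ G.τ u = NodeType.F i) = {u} :=
    fun i => Finset.card_eq_one.mp (unique_TF φ G h i)
  choose nd hnd using hS
  have hndmem : ∀ i (u : G.V), G.τ u = NodeType.T i ∨ G.τ u = NodeType.F i → u = nd i := by
    intro i u hu
    have : u ∈ (Finset.univ.filter fun u : G.V =>
        G.τ u = NodeType.T i ∨ G.τ u = NodeType.F i) := by simp [hu]
    rw [hnd i] at this; simpa using this
  have hndor : ∀ i, G.τ (nd i) = NodeType.T i ∨ G.τ (nd i) = NodeType.F i := by
    intro i
    have : nd i ∈ (Finset.univ.filter fun u : G.V =>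
        G.τ u = NodeType.T i ∨ G.τ u = NodeType.F i) := by
      rw [hnd i]; exact Finset.mem_singleton_self _
    simpa using this
  -- uniqueness of the C j node
  have hxuniq : ∀ y : G.V, G.τ y = NodeType.C j → y = x := by
    intro y hy
    obtain ⟨c0, hc0⟩ := Finset.card_eq_one.mp (h.unique_C j)
    have key : ∀ z : G.V, G.τ z = NodeType.C j → z = c0 := by
      intro z hz
      have : z ∈ Finset.univ.filter fun w : G.V => G.τ w = NodeType.C j := by simp [hz]
      rw [hc0] at this; simpa using this
    rw [key y hy, key x hx]
  -- incoming c j edges at x are all c j edges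
  have hEj : (G.E.filter fun e => e.2.1 = EdgeLabel.c j ∧ e.2.2 = x)
      = G.E.filter fun e => e.2.1 = EdgeLabel.c j := by
    apply Finset.ext
    intro e
    simp only [Finset.mem_filter]
    refine ⟨fun ⟨h1, h2, _⟩ => ⟨h1, h2⟩, fun ⟨h1, h2⟩ => ⟨h1, h2, ?_⟩⟩
    have hl := h.legal e h1
    unfold LegalEdge at hl
    rw [h2] at hl
    rcases hl with ⟨i, _, _, hC⟩ | ⟨i, _, _, hC⟩ <;> exact hxuniq _ hC
  rw [hEj]
  -- group c j edges by source node
  have hfib : (G.E.filter fun e => e.2.1 = EdgeLabel.c j).card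
      = ∑ u : G.V, ((G.E.filter fun e => e.2.1 = EdgeLabel.c j).filter
          fun e => e.1 = u).card :=
    Finset.card_eq_sum_card_fiberwise (fun e _ => Finset.mem_univ e.1)
  set P : G.V → Prop := fun u => ∃ i : Fin n,
    (G.τ u = NodeType.T i ∧ φ.occursPos i j) ∨
    (G.τ u = NodeType.F i ∧ φ.occursNeg i j) with hPdef
  have hcnt : ∀ u : G.V, ((G.E.filter fun e => e.2.1 = EdgeLabel.c j).filter
      fun e => e.1 = u).card = if P u then 1 else 0 := by
    intro u
    rw [Finset.filter_filter]
    by_cases hPu : P u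
    · rw [if_pos hPu]
      obtain ⟨i, hcase⟩ := hPu
      have key : (G.E.filter fun e => e.1 = u ∧ e.2.1 = EdgeLabel.c j ∧
          G.τ e.2.2 = NodeType.C j).card = 1 := by
        rcases hcase with ⟨hT, hocc⟩ | ⟨hF, hocc⟩
        · exact h.T_out_c u i hT j hocc
        · exact h.F_out_c u i hF j hocc
      rw [← key]
      congr 1
      apply Finset.ext
      intro e
      simp only [Finset.mem_filter]
      constructor
      · rintro ⟨h1, h2, h3⟩
        refine ⟨h1, h3, h2, ?_⟩
        have hl := h.legal e h1
        unfold LegalEdge at hl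
        rw [h2] at hl
        rcases hl with ⟨i', _, _, hC⟩ | ⟨i', _, _, hC⟩ <;> exact hC
      · rintro ⟨h1, h2, h3, _⟩
        exact ⟨h1, h3, h2⟩
    · rw [if_neg hPu]
      rw [Finset.card_eq_zero]
      apply Finset.eq_empty_of_forall_notMem
      intro e he
      rw [Finset.mem_filter] at he
      obtain ⟨h1, h2, h3⟩ := he
      have hl := h.legal e h1
      unfold LegalEdge at hl
      rw [h2] at hl
      apply hPu
      rcases hl with ⟨i', hT, hocc, _⟩ | ⟨i', hF, hocc, _⟩
      · exact ⟨i', Or.inl ⟨h3 ▸ hT, hocc⟩⟩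
      · exact ⟨i', Or.inr ⟨h3 ▸ hF, hocc⟩⟩
  rw [hfib, Finset.sum_congr rfl (fun u _ => hcnt u)]
  rw [Finset.sum_boole, Nat.cast_id]
  -- bijection between the true literals and the P-nodes
  symm
  refine Finset.card_bij (fun a _ => nd (φ.clause j a).1) ?_ ?_ ?_
  · intro a ha
    rw [Finset.mem_filter] at ha
    obtain ⟨-, ha⟩ := ha
    rw [Finset.mem_filter]
    refine ⟨Finset.mem_univ _, ?_⟩
    set i := (φ.clause j a).1 with hi
    rcases hb : (φ.clause j a).2 with _ | _
    · -- polarity false: no T node, so nd i has type F i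
      rw [hb] at ha
      have hnoT : ¬ ∃ y : G.V, G.τ y = NodeType.T i := by
        intro hy
        simp [hy] at ha
      have hF : G.τ (nd i) = NodeType.F i := by
        rcases hndor i with hT | hF
        · exact absurd ⟨nd i, hT⟩ hnoT
        · exact hF
      exact ⟨i, Or.inr ⟨hF, ⟨a, Prod.ext hi.symm hb⟩⟩⟩
    · -- polarity true: some T node exists, and it is nd i
      rw [hb] at ha
      have hT : ∃ y : G.V, G.τ y = NodeType.T i := by
        by_contra hc
        simp [hc] at ha
      obtain ⟨y, hy⟩ := hT
      have hyn : y = nd i := hndmem i y (Or.inl hy)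
      have hTn : G.τ (nd i) = NodeType.T i := by rw [← hyn]; exact hy
      exact ⟨i, Or.inl ⟨hTn, ⟨a, Prod.ext hi.symm hb⟩⟩⟩
  · intro a ha a' ha' heq
    have hττ : G.τ (nd (φ.clause j a).1) = G.τ (nd (φ.clause j a').1) := congrArg G.τ heq
    have hvar : (φ.clause j a).1 = (φ.clause j a').1 := by
      rcases hndor (φ.clause j a).1 with h1 | h1 <;>
        rcases hndor (φ.clause j a').1 with h2 | h2 <;>
        rw [h1, h2] at hττ <;> first
          | (injection hττ)
          | (exact absurd hττ (by simp))
    exact φ.distinct j hvar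
  · intro u hu
    rw [Finset.mem_filter] at hu
    obtain ⟨-, i, hcase⟩ := hu
    rcases hcase with ⟨hT, a, ha⟩ | ⟨hF, a, ha⟩
    · refine ⟨a, ?_, ?_⟩
      · rw [Finset.mem_filter]
        refine ⟨Finset.mem_univ _, ?_⟩
        rw [ha]
        simp only [decide_eq_true_eq]
        exact ⟨u, hT⟩
      · show nd (φ.clause j a).1 = u
        rw [ha]
        exact (hndmem i u (Or.inl hT)).symm
    · refine ⟨a, ?_, ?_⟩
      · rw [Finset.mem_filter]
        refine ⟨Finset.mem_univ _, ?_⟩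
        rw [ha]
        simp only [decide_eq_false_iff_not]
        intro ⟨y, hy⟩
        have := hndmem i y (Or.inl hy)
        have hu' := hndmem i u (Or.inr hF)
        rw [← hu'] at this
        rw [this, hF] at hy
        exact absurd hy (by simp)
      · show nd (φ.clause j a).1 = u
        rw [ha]
        exact (hndmem i u (Or.inr hF)).symm
end
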